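/- arXiv:1907.08758 — 5 statements merged into one kernel-verified Lean document; each statement's English description precedes it below -/
import Mathlib

section
/- A plane perfect matching on 2n points in convex position is uniquely determined by its outdegree sequence: two plane perfect matchings with the same outdegree sequence (b_1,…,b_{2n}) are equal. -/
/-- Two chords/diagonals `e = (e₁,e₂)` and `f = (f₁,f₂)` (each with first
coordinate < second coordinate) of a convex polygon cross. -/
def Crosses (e f : ℕ × ℕ) : Prop :=
  (e.1 < f.1 ∧ f.1 < e.2 ∧ e.2 < f.2) ∨ (f.1 < e.1 ∧ e.1 < f.2 ∧ f.2 < e.2)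

instance (e f : ℕ × ℕ) : Decidable (Crosses e f) := by unfold Crosses; infer_instance

/-- `e` is a diagonal of the convex `(n+2)`-gon with points `0,…,n+1`
(0-indexed; point `i` stands for `p_{i+1}`), i.e. a chord joining two
non-adjacent points which is not the hull edge `p₁p_{n+2} = (0,n+1)`. -/
def IsDiag (n : ℕ) (e : ℕ × ℕ) : Prop :=
  e.1 + 2 ≤ e.2 ∧ e.2 ≤ n + 1 ∧ ¬(e.1 = 0 ∧ e.2 = n + 1)

/-- A triangulation of the convex `(n+2)`-gon: a maximal (equivalently, of
cardinality `n-1`) set of pairwise non-crossing diagonals. -/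
def IsTriangulation (n : ℕ) (T : Finset (ℕ × ℕ)) : Prop :=
  (∀ e ∈ T, IsDiag n e) ∧ (∀ e ∈ T, ∀ f ∈ T, ¬ Crosses e f) ∧ T.card = n - 1

/-- Outdegree `d_{i+1}` of point `i` (0-indexed) of a triangulation: the number
of diagonals directed out of `i` (each diagonal directed from lower to higher
index), counting the hull edge `p₁p_{n+2}` (at `i = 0`) but no other hull edge. -/
def triOutdeg (T : Finset (ℕ × ℕ)) (i : ℕ) : ℕ :=
  (T.filter (fun e => e.1 = i)).card + (if i = 0 then 1 else 0)

/-- `M` is a plane (non-crossing) perfect matching on the `2n` points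
`0,…,2n-1` (0-indexed; vertex `v` stands for `v_{v+1}`) in convex position,
edges recorded as pairs `(a,b)` with `a < b`. -/
def IsNCMatching (n : ℕ) (M : Finset (ℕ × ℕ)) : Prop :=
  (∀ e ∈ M, e.1 < e.2 ∧ e.2 < 2 * n) ∧
  (∀ e ∈ M, ∀ f ∈ M, ¬ Crosses e f) ∧
  (∀ v < 2 * n, ∃ e ∈ M, e.1 = v ∨ e.2 = v) ∧
  M.card = n

/-- Outdegree `b_{v+1}` of vertex `v` of a matching (each edge directed from
lower to higher index): `1` if `v` is the lower endpoint of its edge, else `0`. -/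
def matchOutdeg (M : Finset (ℕ × ℕ)) (v : ℕ) : ℕ :=
  (M.filter (fun e => e.1 = v)).card

/-- Auxiliary: a non-crossing matching covering a vertex set `S`, with
pairwise endpoint-disjoint edges. -/
def GoodOn (S : Finset ℕ) (M : Finset (ℕ × ℕ)) : Prop :=
  (∀ e ∈ M, e.1 < e.2 ∧ e.1 ∈ S ∧ e.2 ∈ S) ∧
  (∀ e ∈ M, ∀ f ∈ M, ¬ Crosses e f) ∧
  (∀ v ∈ S, ∃ e ∈ M, e.1 = v ∨ e.2 = v) ∧
  (∀ e ∈ M, ∀ f ∈ M, e ≠ f → e.1 ≠ f.1 ∧ e.1 ≠ f.2 ∧ e.2 ≠ f.1 ∧ e.2 ≠ f.2)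

lemma outdeg_zero_iff (N : Finset (ℕ × ℕ)) (w : ℕ) :
    matchOutdeg N w = 0 ↔ ∀ g ∈ N, g.1 ≠ w := by
  unfold matchOutdeg
  rw [Finset.card_eq_zero, Finset.filter_eq_empty_iff]

lemma outdeg_erase (M : Finset (ℕ × ℕ)) (e : ℕ × ℕ) (he : e ∈ M) (w : ℕ) :
    matchOutdeg (M.erase e) w = matchOutdeg M w - (if e.1 = w then 1 else 0) := by
  unfold matchOutdeg
  rw [Finset.filter_erase]
  by_cases h : e.1 = w
  · rw [Finset.card_erase_of_mem (Finset.mem_filter.mpr ⟨he, h⟩), if_pos h]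
  · rw [Finset.erase_eq_of_notMem, if_neg h, Nat.sub_zero]
    intro hc
    exact h (Finset.mem_filter.mp hc).2

lemma goodOn_empty {S : Finset ℕ} {M : Finset (ℕ × ℕ)}
    (hG : GoodOn S M) (hS : S = ∅) : M = ∅ := by
  rw [Finset.eq_empty_iff_forall_notMem]
  intro e he
  have := (hG.1 e he).2.1
  rw [hS] at this
  exact absurd this (Finset.notMem_empty _)

/-- The edge ending at the least outdegree-0 vertex `v` goes to the
largest element of `S` below `v`. -/
lemma edge_at (S : Finset ℕ) (M : Finset (ℕ × ℕ)) (hG : GoodOn S M) (v : ℕ)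
    (hvS : v ∈ S) (hvz : matchOutdeg M v = 0)
    (hmin : ∀ w ∈ S, w < v → matchOutdeg M w ≠ 0) :
    ∃ e ∈ M, e.2 = v ∧ e.1 ∈ S ∧ ∀ w ∈ S, w < v → w ≤ e.1 := by
  obtain ⟨h1, h2, h3, h4⟩ := hG
  obtain ⟨e, heM, hev⟩ := h3 v hvS
  have he2 : e.2 = v := by
    rcases hev with hcase | hcase
    · exact absurd hcase ((outdeg_zero_iff M v).mp hvz e heM)
    · exact hcase
  refine ⟨e, heM, he2, (h1 e heM).2.1, ?_⟩
  intro w hwS hwv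
  by_contra hlt
  push_neg at hlt
  have hwz := hmin w hwS hwv
  have hex : ∃ f ∈ M, f.1 = w := by
    by_contra hc
    push_neg at hc
    exact hwz ((outdeg_zero_iff M w).mpr hc)
  obtain ⟨f, hfM, hf1⟩ := hex
  have hf12 := (h1 f hfM).1
  have hfe : f ≠ e := by
    intro hh
    rw [hh] at hf1
    omega
  have hf2v : f.2 ≠ v := by
    intro hh
    exact (h4 f hfM e heM hfe).2.2.2 (hh.trans he2.symm)
  have hf2lt : f.2 < v := by
    by_contra hge
    push_neg at hge
    refine h2 e heM f hfM ?_
    unfold Crosses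
    exact Or.inl ⟨by omega, by omega, by omega⟩
  have hf2S : f.2 ∈ S := (h1 f hfM).2.2
  have hf2z : matchOutdeg M f.2 = 0 := by
    rw [outdeg_zero_iff]
    intro g hg hg1
    have hgf : g ≠ f := by
      intro hh
      rw [hh] at hg1
      omega
    exact (h4 g hg f hfM hgf).2.1 hg1
  exact hmin f.2 hf2S (by omega) hf2z

lemma goodOn_erase (S : Finset ℕ) (M : Finset (ℕ × ℕ)) (e : ℕ × ℕ)
    (hG : GoodOn S M) (heM : e ∈ M) :
    GoodOn ((S.erase e.1).erase e.2) (M.erase e) := by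
  obtain ⟨h1, h2, h3, h4⟩ := hG
  have huniq : ∀ g ∈ M, (g.1 = e.1 ∨ g.2 = e.1 ∨ g.1 = e.2 ∨ g.2 = e.2) → g = e := by
    intro g hg hcase
    by_contra hne
    have hd := h4 g hg e heM hne
    rcases hcase with hh | hh | hh | hh
    · exact hd.1 hh
    · exact hd.2.2.1 hh
    · exact hd.2.1 hh
    · exact hd.2.2.2 hh
  refine ⟨?_, ?_, ?_, ?_⟩
  · intro g hg
    rw [Finset.mem_erase] at hg
    obtain ⟨hne, hgM⟩ := hg
    obtain ⟨hlt, hg1S, hg2S⟩ := h1 g hgM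
    refine ⟨hlt, ?_, ?_⟩
    · rw [Finset.mem_erase, Finset.mem_erase]
      exact ⟨fun hh => hne (huniq g hgM (Or.inr (Or.inr (Or.inl hh)))),
             fun hh => hne (huniq g hgM (Or.inl hh)), hg1S⟩
    · rw [Finset.mem_erase, Finset.mem_erase]
      exact ⟨fun hh => hne (huniq g hgM (Or.inr (Or.inr (Or.inr hh)))),
             fun hh => hne (huniq g hgM (Or.inr (Or.inl hh))), hg2S⟩
  · intro g hg f hf
    exact h2 g (Finset.mem_of_mem_erase hg) f (Finset.mem_of_mem_erase hf)
  · intro w hw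
    rw [Finset.mem_erase, Finset.mem_erase] at hw
    obtain ⟨hw2, hw1, hwS⟩ := hw
    obtain ⟨g, hgM, hgw⟩ := h3 w hwS
    refine ⟨g, Finset.mem_erase.mpr ⟨?_, hgM⟩, hgw⟩
    intro hh
    rw [hh] at hgw
    rcases hgw with hgw | hgw
    · exact hw1 hgw.symm
    · exact hw2 hgw.symm
  · intro g hg f hf
    exact h4 g (Finset.mem_of_mem_erase hg) f (Finset.mem_of_mem_erase hf)

lemma key : ∀ (k : ℕ) (S : Finset ℕ) (M M' : Finset (ℕ × ℕ)), S.card ≤ k →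
    GoodOn S M → GoodOn S M' →
    (∀ v, matchOutdeg M v = matchOutdeg M' v) → M = M' := by
  intro k
  induction k with
  | zero =>
    intro S M M' hcard hG hG' h
    have hSe : S = ∅ := Finset.card_eq_zero.mp (Nat.le_zero.mp hcard)
    rw [goodOn_empty hG hSe, goodOn_empty hG' hSe]
  | succ k ih =>
    intro S M M' hcard hG hG' h
    by_cases hS : S.Nonempty
    · -- find the least outdegree-0 vertex v
      have ht0S : S.max' hS ∈ S := S.max'_mem hS
      have ht0z : matchOutdeg M (S.max' hS) = 0 := by
        rw [outdeg_zero_iff]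
        intro g hg hg1
        have hgp := hG.1 g hg
        have := S.le_max' g.2 hgp.2.2
        omega
      set C := S.filter (fun w => matchOutdeg M w = 0) with hC
      have hCne : C.Nonempty := ⟨S.max' hS, Finset.mem_filter.mpr ⟨ht0S, ht0z⟩⟩
      set v := C.min' hCne with hvdef
      have hvC : v ∈ S ∧ matchOutdeg M v = 0 := Finset.mem_filter.mp (C.min'_mem hCne)
      have hmin : ∀ w ∈ S, w < v → matchOutdeg M w ≠ 0 := by
        intro w hw hwv hwz
        have := C.min'_le w (Finset.mem_filter.mpr ⟨hw, hwz⟩)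
        omega
      obtain ⟨e, heM, he2, he1S, hemax⟩ := edge_at S M hG v hvC.1 hvC.2 hmin
      obtain ⟨e', he'M, he'2, he'1S, he'max⟩ :=
        edge_at S M' hG' v hvC.1 (by rw [← h]; exact hvC.2)
          (fun w hw hwv => by rw [← h]; exact hmin w hw hwv)
      have he1lt : e.1 < v := by
        have := (hG.1 e heM).1
        omega
      have he'1lt : e'.1 < v := by
        have := (hG'.1 e' he'M).1
        omega
      have hee' : e' = e := by
        have hle1 := hemax e'.1 he'1S he'1lt
        have hle2 := he'max e.1 he1S he1lt
        exact Prod.ext (le_antisymm hle1 hle2) (he'2.trans he2.symm)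
      rw [hee'] at he'M he'2
      -- induction on S minus the two endpoints of e
      have hvmem : v ∈ S.erase e.1 := Finset.mem_erase.mpr ⟨by omega, hvC.1⟩
      have hcard' : ((S.erase e.1).erase v).card ≤ k := by
        have hc1 : (S.erase e.1).card = S.card - 1 := Finset.card_erase_of_mem he1S
        have hc2 : ((S.erase e.1).erase v).card = (S.erase e.1).card - 1 :=
          Finset.card_erase_of_mem hvmem
        have : 1 ≤ S.card := Finset.card_pos.mpr hS
        omega
      have hGe := goodOn_erase S M e hG heM
      have hGe' := goodOn_erase S M' e hG' he'M
      rw [he2] at hGe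
      rw [he2] at hGe'
      have hout : ∀ w, matchOutdeg (M.erase e) w = matchOutdeg (M'.erase e) w := by
        intro w
        rw [outdeg_erase M e heM w, outdeg_erase M' e he'M w, h w]
      have hIH := ih ((S.erase e.1).erase v) (M.erase e) (M'.erase e) hcard' hGe hGe' hout
      rw [← Finset.insert_erase heM, ← Finset.insert_erase he'M, hIH]
    · rw [Finset.not_nonempty_iff_eq_empty] at hS
      rw [goodOn_empty hG hS, goodOn_empty hG' hS]

/-- Endpoint-disjointness follows from the cardinality and covering
conditions by counting. -/
lemma ncm_disjoint (n : ℕ) (M : Finset (ℕ × ℕ)) (hM : IsNCMatching n M) :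
    ∀ e ∈ M, ∀ f ∈ M, e ≠ f → e.1 ≠ f.1 ∧ e.1 ≠ f.2 ∧ e.2 ≠ f.1 ∧ e.2 ≠ f.2 := by
  obtain ⟨h1, h2, h3, h4⟩ := hM
  have main : ∀ e ∈ M, ∀ f ∈ M, e ≠ f → ∀ w : ℕ,
      (w = e.1 ∨ w = e.2) → (w = f.1 ∨ w = f.2) → False := by
    intro e he f hf hef w hwe hwf
    set t : ℕ × ℕ → Finset ℕ := fun g => {g.1, g.2} with ht
    set A := (M.erase f).biUnion t with hA
    set B := M.biUnion t with hB
    have hBA : B = t f ∪ A := by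
      rw [hB, hA, ← Finset.biUnion_insert, Finset.insert_erase hf]
    have hrange : Finset.range (2 * n) ⊆ B := by
      intro x hx
      obtain ⟨g, hgM, hgx⟩ := h3 x (Finset.mem_range.mp hx)
      rw [hB, Finset.mem_biUnion]
      refine ⟨g, hgM, ?_⟩
      rcases hgx with hh | hh
      · rw [ht]; simp [hh]
      · rw [ht]; simp [hh]
    have hBcard : 2 * n ≤ B.card := by
      calc 2 * n = (Finset.range (2 * n)).card := (Finset.card_range _).symm
        _ ≤ B.card := Finset.card_le_card hrange
    have hAcard : A.card ≤ (n - 1) * 2 := by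
      calc A.card ≤ ∑ g ∈ M.erase f, (t g).card := Finset.card_biUnion_le
        _ ≤ (M.erase f).card * 2 := by
            apply Finset.sum_le_card_nsmul
            intro g _
            rw [ht]
            calc ({g.1, g.2} : Finset ℕ).card ≤ ({g.2} : Finset ℕ).card + 1 :=
                  Finset.card_insert_le _ _
              _ = 2 := by rw [Finset.card_singleton]
        _ = (n - 1) * 2 := by rw [Finset.card_erase_of_mem hf, h4]
    have hwA : w ∈ A := by
      rw [hA, Finset.mem_biUnion]
      refine ⟨e, Finset.mem_erase.mpr ⟨hef, he⟩, ?_⟩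
      rcases hwe with hh | hh
      · rw [ht]; simp [hh]
      · rw [ht]; simp [hh]
    have hwtf : w ∈ t f := by
      rcases hwf with hh | hh
      · rw [ht]; simp [hh]
      · rw [ht]; simp [hh]
    have hsd : (t f \ A).card ≤ 1 := by
      have hss : t f \ A ⊂ t f :=
        (Finset.ssubset_iff_of_subset (Finset.sdiff_subset)).mpr
          ⟨w, hwtf, fun hc => (Finset.mem_sdiff.mp hc).2 hwA⟩
      have hlt := Finset.card_lt_card hss
      have htf2 : (t f).card ≤ 2 := by
        rw [ht]
        calc ({f.1, f.2} : Finset ℕ).card ≤ ({f.2} : Finset ℕ).card + 1 :=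
              Finset.card_insert_le _ _
          _ = 2 := by rw [Finset.card_singleton]
      omega
    have hBle : B.card ≤ (t f \ A).card + A.card := by
      rw [hBA]
      rw [← Finset.card_sdiff_add_card]
    have hn : 1 ≤ n := by
      have : 0 < M.card := Finset.card_pos.mpr ⟨f, hf⟩
      omega
    omega
  intro e he f hf hef
  refine ⟨?_, ?_, ?_, ?_⟩
  · intro hh; exact main e he f hf hef e.1 (Or.inl rfl) (Or.inl hh)
  · intro hh; exact main e he f hf hef e.1 (Or.inl rfl) (Or.inr hh)
  · intro hh; exact main e he f hf hef e.2 (Or.inr rfl) (Or.inl hh)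
  · intro hh; exact main e he f hf hef e.2 (Or.inr rfl) (Or.inr hh)

/-- A plane perfect matching on `2n` points in convex position is
uniquely determined by its outdegree sequence. -/
theorem stmt2 (n : ℕ) (M M' : Finset (ℕ × ℕ))
    (hM : IsNCMatching n M) (hM' : IsNCMatching n M')
    (h : ∀ v, matchOutdeg M v = matchOutdeg M' v) : M = M' := by
  have hd := ncm_disjoint n M hM
  have hd' := ncm_disjoint n M' hM'
  obtain ⟨h1, h2, h3, _⟩ := hM
  obtain ⟨h1', h2', h3', _⟩ := hM'
  refine key (Finset.range (2 * n)).card (Finset.range (2 * n)) M M' le_rfl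
    ⟨?_, h2, ?_, hd⟩ ⟨?_, h2', ?_, hd'⟩ h
  · intro e he
    have := h1 e he
    exact ⟨this.1, Finset.mem_range.mpr (by omega), Finset.mem_range.mpr this.2⟩
  · intro v hv
    exact h3 v (Finset.mem_range.mp hv)
  · intro e he
    have := h1' e he
    exact ⟨this.1, Finset.mem_range.mpr (by omega), Finset.mem_range.mpr this.2⟩
  · intro v hv
    exact h3' v (Finset.mem_range.mp hv)
end

section
/- The number of diagonals of T_1 crossed by at least one diagonal of T_2 equals the number of diagonals of T_2 crossed by at least one diagonal of T_1, for any two triangulations T_1, T_2 of a convex polygon. -/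
lemma crosses_self (p : ℕ × ℕ) : ¬ Crosses p p := by
  obtain ⟨a, b⟩ := p; simp [Crosses]

lemma crosses_symm {e f : ℕ × ℕ} (h : Crosses e f) : Crosses f e := h.symm

/-- Key bound: a pairwise non-crossing set of diagonals of the polygon with
vertices `0,…,m` has at most `m - 2` elements. -/
lemma noncross_card_le : ∀ (m : ℕ) (S : Finset (ℕ × ℕ)),
    (∀ e ∈ S, e.1 + 2 ≤ e.2 ∧ e.2 ≤ m ∧ ¬(e.1 = 0 ∧ e.2 = m)) →
    (∀ e ∈ S, ∀ f ∈ S, ¬ Crosses e f) →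
    S.card ≤ m - 2 := by
  intro m
  induction m using Nat.strong_induction_on with
  | _ m ih =>
    intro S hd hnc
    rcases S.eq_empty_or_nonempty with rfl | hS
    · simp
    obtain ⟨e₀, he₀, hmin⟩ := S.exists_min_image (fun e => e.2 - e.1) hS
    obtain ⟨i, j⟩ := e₀
    simp only at hmin
    obtain ⟨hij2, hjm, hij0⟩ := hd (i, j) he₀
    simp only at hij2 hjm hij0
    -- Claim A : every other diagonal avoids the open interval (i,j)
    have hA : ∀ e ∈ S.erase (i, j), e.2 ≤ i ∨ j ≤ e.1 ∨ (e.1 ≤ i ∧ j ≤ e.2) := by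
      intro e he
      have heS := Finset.mem_of_mem_erase he
      have hne : ¬(e.1 = i ∧ e.2 = j) := by
        intro h
        exact Finset.ne_of_mem_erase he (Prod.ext h.1 h.2)
      have hde := hd e heS
      have hcr := hnc (i, j) he₀ e heS
      have hmin' := hmin e heS
      unfold Crosses at hcr
      simp only at hcr hde hmin'
      omega
    set φ : ℕ → ℕ := fun v => if j ≤ v then v + i + 1 - j else v with hφdef
    have hφlo : ∀ v, v ≤ i → φ v = v := by
      intro v hv; simp only [hφdef]; rw [if_neg]; omega
    have hφhi : ∀ v, j ≤ v → φ v = v + i + 1 - j := by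
      intro v hv; simp only [hφdef]; rw [if_pos hv]
    -- endpoint domain facts for elements of the erase
    have hdom : ∀ e ∈ S.erase (i, j),
        ((e.1 ≤ i ∧ φ e.1 = e.1) ∨ (j ≤ e.1 ∧ φ e.1 = e.1 + i + 1 - j)) ∧
        ((e.2 ≤ i ∧ φ e.2 = e.2) ∨ (j ≤ e.2 ∧ φ e.2 = e.2 + i + 1 - j)) := by
      intro e he
      have hAe := hA e he
      have hde := hd e (Finset.mem_of_mem_erase he)
      have h1 : e.1 ≤ i ∨ j ≤ e.1 := by omega
      have h2 : e.2 ≤ i ∨ j ≤ e.2 := by omega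
      constructor
      · rcases h1 with h | h
        · exact Or.inl ⟨h, hφlo _ h⟩
        · exact Or.inr ⟨h, hφhi _ h⟩
      · rcases h2 with h | h
        · exact Or.inl ⟨h, hφlo _ h⟩
        · exact Or.inr ⟨h, hφhi _ h⟩
    set S' : Finset (ℕ × ℕ) := (S.erase (i, j)).image (fun e => (φ e.1, φ e.2)) with hS'def
    have hcard' : S'.card = S.card - 1 := by
      rw [hS'def, Finset.card_image_of_injOn, Finset.card_erase_of_mem he₀]
      intro e he f hf hef
      simp only [Prod.mk.injEq] at hef
      obtain ⟨hv1, hv2⟩ := hdom e he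
      obtain ⟨hv3, hv4⟩ := hdom f hf
      have h1 : e.1 = f.1 := by omega
      have h2 : e.2 = f.2 := by omega
      exact Prod.ext h1 h2
    have hd' : ∀ e ∈ S', e.1 + 2 ≤ e.2 ∧ e.2 ≤ m - (j - i - 1) ∧
        ¬(e.1 = 0 ∧ e.2 = m - (j - i - 1)) := by
      intro e' he'
      rw [hS'def, Finset.mem_image] at he'
      obtain ⟨e, he, rfl⟩ := he'
      have hde := hd e (Finset.mem_of_mem_erase he)
      have hne : ¬(e.1 = i ∧ e.2 = j) := by
        intro h
        exact Finset.ne_of_mem_erase he (Prod.ext h.1 h.2)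
      have hAe := hA e he
      obtain ⟨hv1, hv2⟩ := hdom e he
      simp only at hde ⊢
      omega
    have hnc' : ∀ e ∈ S', ∀ f ∈ S', ¬ Crosses e f := by
      intro e' he' f' hf'
      rw [hS'def, Finset.mem_image] at he' hf'
      obtain ⟨e, he, rfl⟩ := he'
      obtain ⟨f, hf, rfl⟩ := hf'
      have hcr := hnc e (Finset.mem_of_mem_erase he) f (Finset.mem_of_mem_erase hf)
      obtain ⟨hv1, hv2⟩ := hdom e he
      obtain ⟨hv3, hv4⟩ := hdom f hf
      unfold Crosses at hcr ⊢
      simp only at hcr ⊢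
      omega
    have hlt : m - (j - i - 1) < m := by omega
    have hbound := ih (m - (j - i - 1)) hlt S' hd' hnc'
    have hm2 : 2 ≤ m - (j - i - 1) := by omega
    have hSpos : 1 ≤ S.card := Finset.card_pos.mpr hS
    omega

lemma uncrossed_mem (n : ℕ) (T₁ T₂ : Finset (ℕ × ℕ)) (h₁ : IsTriangulation n T₁)
    (h₂ : IsTriangulation n T₂) (e : ℕ × ℕ) (he : e ∈ T₁)
    (hnc : ∀ f ∈ T₂, ¬ Crosses e f) : e ∈ T₂ := by
  by_contra hne
  have hd : ∀ f ∈ insert e T₂, f.1 + 2 ≤ f.2 ∧ f.2 ≤ n + 1 ∧ ¬(f.1 = 0 ∧ f.2 = n + 1) := by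
    intro f hf
    rcases Finset.mem_insert.mp hf with rfl | hf
    · exact h₁.1 f he
    · exact h₂.1 f hf
  have hcr : ∀ f ∈ insert e T₂, ∀ g ∈ insert e T₂, ¬ Crosses f g := by
    intro f hf g hg
    rcases Finset.mem_insert.mp hf with rfl | hf
    · rcases Finset.mem_insert.mp hg with rfl | hg
      · exact crosses_self _
      · exact hnc _ hg
    · rcases Finset.mem_insert.mp hg with hge | hg
      · rw [hge]
        exact fun h => hnc f hf (crosses_symm h)
      · exact h₂.2.1 f hf g hg
  have hb := noncross_card_le (n + 1) (insert e T₂) hd hcr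
  rw [Finset.card_insert_of_notMem hne, h₂.2.2] at hb
  have : 1 ≤ n - 1 := by omega
  omega

lemma uncrossed_eq_inter (n : ℕ) (T₁ T₂ : Finset (ℕ × ℕ)) (h₁ : IsTriangulation n T₁)
    (h₂ : IsTriangulation n T₂) :
    T₁.filter (fun e => ¬ ∃ f ∈ T₂, Crosses e f) = T₁ ∩ T₂ := by
  ext e
  simp only [Finset.mem_filter, Finset.mem_inter]
  constructor
  · rintro ⟨he, hcr⟩
    push_neg at hcr
    exact ⟨he, uncrossed_mem n T₁ T₂ h₁ h₂ e he hcr⟩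
  · rintro ⟨he1, he2⟩
    refine ⟨he1, ?_⟩
    rintro ⟨f, hf, hcrf⟩
    exact h₂.2.1 e he2 f hf hcrf

/-- The number of diagonals of `T₁` crossed by at least one
diagonal of `T₂` equals the number of diagonals of `T₂` crossed by at least
one diagonal of `T₁`. -/
theorem stmt8 (n : ℕ) (T₁ T₂ : Finset (ℕ × ℕ))
    (h₁ : IsTriangulation n T₁) (h₂ : IsTriangulation n T₂) :
    (T₁.filter (fun e => ∃ f ∈ T₂, Crosses e f)).card =
      (T₂.filter (fun f => ∃ e ∈ T₁, Crosses f e)).card := by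
  have k1 := Finset.card_filter_add_card_filter_not
    (s := T₁) (p := fun e => ∃ f ∈ T₂, Crosses e f)
  have k2 := Finset.card_filter_add_card_filter_not
    (s := T₂) (p := fun f => ∃ e ∈ T₁, Crosses f e)
  rw [uncrossed_eq_inter n T₁ T₂ h₁ h₂] at k1
  rw [uncrossed_eq_inter n T₂ T₁ h₂ h₁] at k2
  rw [h₁.2.2] at k1
  rw [h₂.2.2] at k2
  rw [Finset.inter_comm] at k2
  omega
end

section
/- In the Temperley-Lieb algebra TL_n, the flip distance (in the diagonal-flip graph of the convex (n+2)-gon under the diagram-triangulation correspondence) between the triangulations corresponding to generators u_i and u_{i+1} equals 3 if i ≠ n−2 and equals 2 if i = n−2, for 1 ≤ i ≤ n−2. -/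
/-- Two triangulations are adjacent in the diagonal-flip graph iff they differ
by exchanging exactly one diagonal. -/
def FlipAdj (n : ℕ) (T T' : Finset (ℕ × ℕ)) : Prop :=
  IsTriangulation n T ∧ IsTriangulation n T' ∧ (T \ T').card = 1 ∧ (T' \ T).card = 1

/-- There is a sequence of `m` diagonal-flips transforming `T` into `T'`. -/
def HasFlipSeq (n : ℕ) : ℕ → Finset (ℕ × ℕ) → Finset (ℕ × ℕ) → Prop
  | 0, T, T' => T = T'
  | m + 1, T, T' => ∃ S, FlipAdj n T S ∧ HasFlipSeq n m S T'

/-- The flip distance between `T` and `T'` equals `k`. -/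
def FlipDist (n : ℕ) (T T' : Finset (ℕ × ℕ)) (k : ℕ) : Prop :=
  HasFlipSeq n k T T' ∧ ∀ m, HasFlipSeq n m T T' → k ≤ m

/-- The (0-indexed) matching diagram of the identity of `TL_n`: propagating
lines `v_{k} v_{2n+1-k}` (1-indexed), i.e. edges `(t, 2n-1-t)`. -/
def idMatch (n : ℕ) : Finset (ℕ × ℕ) :=
  (Finset.range n).image (fun t => (t, 2 * n - 1 - t))

/-- The (0-indexed) matching diagram of the generator `u_i` of `TL_n`
(`1 ≤ i ≤ n-1`): arcs `v_i v_{i+1}` and `v_{2n-i} v_{2n-i+1}` (1-indexed) and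
propagating lines `v_k v_{2n+1-k}` for the remaining vertices. -/
def genMatch (n i : ℕ) : Finset (ℕ × ℕ) :=
  {(i - 1, i), (2 * n - i - 1, 2 * n - i)} ∪
    ((Finset.range n).filter (fun t => t ≠ i - 1 ∧ t ≠ i)).image
      (fun t => (t, 2 * n - 1 - t))

/-- The fan triangulation of the `(n+2)`-gon at `p₁`: all diagonals `p₁ p_j`,
`3 ≤ j ≤ n+1` (0-indexed: `(0,t)` for `2 ≤ t ≤ n`). -/
def fanTri (n : ℕ) : Finset (ℕ × ℕ) :=
  (Finset.Icc 2 n).image (fun t => ((0 : ℕ), t))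

/-- The triangulation of the `(n+2)`-gon corresponding to the generator `u_i`
of `TL_n` (0-indexed points): the diagonal `e_i = p_{n-i+1}p_{n-i+3}`, the
diagonal `f_i = p₂p_{n-i+3}`, the fan `p₁p_j`, `n-i+3 ≤ j ≤ n+1`, at `p₁`, and
the fan `p₂p_j`, `4 ≤ j ≤ n-i+1`, at `p₂`. -/
def genTri (n i : ℕ) : Finset (ℕ × ℕ) :=
  {(n - i, n - i + 2), (1, n - i + 2)} ∪
    (Finset.Icc (n - i + 2) n).image (fun t => ((0 : ℕ), t)) ∪
    (Finset.Icc 3 (n - i)).image (fun t => ((1 : ℕ), t))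
set_option maxHeartbeats 1000000
set_option linter.all false

namespace Stmt9Aux

def C (n j : ℕ) : Finset (ℕ × ℕ) :=
  (Finset.Icc (j+2) n).image (fun t => ((0:ℕ), t)) ∪
  (Finset.Icc 3 (j-1)).image (fun t => ((1:ℕ), t))

lemma mem_C {n j a b : ℕ} :
    (a, b) ∈ C n j ↔ (a = 0 ∧ j+2 ≤ b ∧ b ≤ n) ∨ (a = 1 ∧ 3 ≤ b ∧ b ≤ j-1) := by
  simp only [C, Finset.mem_union, Finset.mem_image, Finset.mem_Icc, Prod.mk.injEq]
  constructor
  · rintro (⟨t, ht, h0, hb⟩ | ⟨t, ht, h0, hb⟩) <;> omega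
  · rintro (⟨h0, h1, h2⟩ | ⟨h0, h1, h2⟩)
    · exact Or.inl ⟨b, ⟨h1, h2⟩, h0.symm, rfl⟩
    · exact Or.inr ⟨b, ⟨h1, h2⟩, h0.symm, rfl⟩

lemma card_C {n j : ℕ} (hj : 1 ≤ j) : (C n j).card = (n + 1 - (j + 2)) + (j - 3) := by
  have hinj0 : Function.Injective (fun t : ℕ => ((0:ℕ), t)) := by
    intro a b h; simpa using h
  have hinj1 : Function.Injective (fun t : ℕ => ((1:ℕ), t)) := by
    intro a b h; simpa using h
  have hdisj : Disjoint ((Finset.Icc (j+2) n).image (fun t => ((0:ℕ), t)))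
      ((Finset.Icc 3 (j-1)).image (fun t => ((1:ℕ), t))) := by
    rw [Finset.disjoint_left]
    rintro x hx hy
    simp only [Finset.mem_image] at hx hy
    obtain ⟨t, _, rfl⟩ := hx
    obtain ⟨s, _, h⟩ := hy
    simp at h
  rw [C, Finset.card_union_of_disjoint hdisj,
    Finset.card_image_of_injective _ hinj0, Finset.card_image_of_injective _ hinj1,
    Nat.card_Icc, Nat.card_Icc]
  omega

lemma mem_genTri {n i a b : ℕ} :
    (a, b) ∈ genTri n i ↔ (a = n - i ∧ b = n - i + 2) ∨ (a = 1 ∧ b = n - i + 2) ∨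
      (a = 0 ∧ n - i + 2 ≤ b ∧ b ≤ n) ∨ (a = 1 ∧ 3 ≤ b ∧ b ≤ n - i) := by
  simp only [genTri, Finset.mem_union, Finset.mem_insert, Finset.mem_singleton,
    Finset.mem_image, Finset.mem_Icc, Prod.mk.injEq]
  constructor
  · rintro ((⟨⟨h1,h2⟩ | ⟨h1,h2⟩⟩ | ⟨t, ⟨ht1, ht2⟩, h1, h2⟩) | ⟨t, ⟨ht1, ht2⟩, h1, h2⟩) <;> omega
  · rintro (⟨h1,h2⟩ | ⟨h1,h2⟩ | ⟨h1,h2,h3⟩ | ⟨h1,h2,h3⟩)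
    · exact Or.inl (Or.inl (Or.inl ⟨h1, h2⟩))
    · exact Or.inl (Or.inl (Or.inr ⟨h1, h2⟩))
    · exact Or.inl (Or.inr ⟨b, ⟨h2, h3⟩, h1.symm, rfl⟩)
    · exact Or.inr ⟨b, ⟨h2, h3⟩, h1.symm, rfl⟩

lemma card_I3 {p q r : ℕ × ℕ} {s : Finset (ℕ × ℕ)}
    (h1 : p ≠ q) (h2 : p ≠ r) (h3 : p ∉ s) (h4 : q ≠ r) (h5 : q ∉ s) (h6 : r ∉ s) :
    (insert p (insert q (insert r s))).card = s.card + 3 := by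
  rw [Finset.card_insert_of_notMem (by simp [h1, h2, h3]),
    Finset.card_insert_of_notMem (by simp [h4, h5]),
    Finset.card_insert_of_notMem h6]

lemma card_I2 {p q : ℕ × ℕ} {s : Finset (ℕ × ℕ)}
    (h1 : p ≠ q) (h3 : p ∉ s) (h5 : q ∉ s) :
    (insert p (insert q s)).card = s.card + 2 := by
  rw [Finset.card_insert_of_notMem (by simp [h1, h3]),
    Finset.card_insert_of_notMem h5]

def T0 (n j : ℕ) : Finset (ℕ × ℕ) := insert (j, j+2) (insert (1, j+2) (insert (1, j) (C n j)))
def T1 (n j : ℕ) : Finset (ℕ × ℕ) := insert (1, j+1) (insert (1, j+2) (insert (1, j) (C n j)))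
def T2 (n j : ℕ) : Finset (ℕ × ℕ) := insert (1, j+1) (insert (0, j+1) (insert (1, j) (C n j)))
def T3 (n j : ℕ) : Finset (ℕ × ℕ) := insert (1, j+1) (insert (0, j+1) (insert (j-1, j+1) (C n j)))

lemma mem_T0 {n j a b : ℕ} : (a, b) ∈ T0 n j ↔ (a = j ∧ b = j+2) ∨ (a = 1 ∧ b = j+2) ∨
    (a = 1 ∧ b = j) ∨ (a = 0 ∧ j+2 ≤ b ∧ b ≤ n) ∨ (a = 1 ∧ 3 ≤ b ∧ b ≤ j-1) := by
  simp only [T0, Finset.mem_insert, Prod.mk.injEq, mem_C]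

lemma mem_T1 {n j a b : ℕ} : (a, b) ∈ T1 n j ↔ (a = 1 ∧ b = j+1) ∨ (a = 1 ∧ b = j+2) ∨
    (a = 1 ∧ b = j) ∨ (a = 0 ∧ j+2 ≤ b ∧ b ≤ n) ∨ (a = 1 ∧ 3 ≤ b ∧ b ≤ j-1) := by
  simp only [T1, Finset.mem_insert, Prod.mk.injEq, mem_C]

lemma mem_T2 {n j a b : ℕ} : (a, b) ∈ T2 n j ↔ (a = 1 ∧ b = j+1) ∨ (a = 0 ∧ b = j+1) ∨
    (a = 1 ∧ b = j) ∨ (a = 0 ∧ j+2 ≤ b ∧ b ≤ n) ∨ (a = 1 ∧ 3 ≤ b ∧ b ≤ j-1) := by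
  simp only [T2, Finset.mem_insert, Prod.mk.injEq, mem_C]

lemma mem_T3 {n j a b : ℕ} : (a, b) ∈ T3 n j ↔ (a = 1 ∧ b = j+1) ∨ (a = 0 ∧ b = j+1) ∨
    (a = j-1 ∧ b = j+1) ∨ (a = 0 ∧ j+2 ≤ b ∧ b ≤ n) ∨ (a = 1 ∧ 3 ≤ b ∧ b ≤ j-1) := by
  simp only [T3, Finset.mem_insert, Prod.mk.injEq, mem_C]

lemma tri_T0 (n j : ℕ) (hj : 3 ≤ j) (hn : j + 1 ≤ n) : IsTriangulation n (T0 n j) := by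
  refine ⟨?_, ?_, ?_⟩
  · rintro ⟨a, b⟩ he; rw [mem_T0] at he; dsimp only [IsDiag]; omega
  · rintro ⟨a, b⟩ he ⟨c, d⟩ hf; rw [mem_T0] at he hf; dsimp only [Crosses]; omega
  · rw [T0, card_I3 (by intro h; rw [Prod.mk.injEq] at h; omega)
      (by intro h; rw [Prod.mk.injEq] at h; omega)
      (by rw [mem_C]; omega)
      (by intro h; rw [Prod.mk.injEq] at h; omega)
      (by rw [mem_C]; omega)
      (by rw [mem_C]; omega), card_C (by omega)]
    omega

lemma tri_T1 (n j : ℕ) (hj : 3 ≤ j) (hn : j + 1 ≤ n) : IsTriangulation n (T1 n j) := by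
  refine ⟨?_, ?_, ?_⟩
  · rintro ⟨a, b⟩ he; rw [mem_T1] at he; dsimp only [IsDiag]; omega
  · rintro ⟨a, b⟩ he ⟨c, d⟩ hf; rw [mem_T1] at he hf; dsimp only [Crosses]; omega
  · rw [T1, card_I3 (by intro h; rw [Prod.mk.injEq] at h; omega)
      (by intro h; rw [Prod.mk.injEq] at h; omega)
      (by rw [mem_C]; omega)
      (by intro h; rw [Prod.mk.injEq] at h; omega)
      (by rw [mem_C]; omega)
      (by rw [mem_C]; omega), card_C (by omega)]
    omega

lemma tri_T2 (n j : ℕ) (hj : 3 ≤ j) (hn : j + 1 ≤ n) : IsTriangulation n (T2 n j) := by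
  refine ⟨?_, ?_, ?_⟩
  · rintro ⟨a, b⟩ he; rw [mem_T2] at he; dsimp only [IsDiag]; omega
  · rintro ⟨a, b⟩ he ⟨c, d⟩ hf; rw [mem_T2] at he hf; dsimp only [Crosses]; omega
  · rw [T2, card_I3 (by intro h; rw [Prod.mk.injEq] at h; omega)
      (by intro h; rw [Prod.mk.injEq] at h; omega)
      (by rw [mem_C]; omega)
      (by intro h; rw [Prod.mk.injEq] at h; omega)
      (by rw [mem_C]; omega)
      (by rw [mem_C]; omega), card_C (by omega)]
    omega

lemma tri_T3 (n j : ℕ) (hj : 3 ≤ j) (hn : j + 1 ≤ n) : IsTriangulation n (T3 n j) := by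
  refine ⟨?_, ?_, ?_⟩
  · rintro ⟨a, b⟩ he; rw [mem_T3] at he; dsimp only [IsDiag]; omega
  · rintro ⟨a, b⟩ he ⟨c, d⟩ hf; rw [mem_T3] at he hf; dsimp only [Crosses]; omega
  · rw [T3, card_I3 (by intro h; rw [Prod.mk.injEq] at h; omega)
      (by intro h; rw [Prod.mk.injEq] at h; omega)
      (by rw [mem_C]; omega)
      (by intro h; rw [Prod.mk.injEq] at h; omega)
      (by rw [mem_C]; omega)
      (by rw [mem_C]; omega), card_C (by omega)]
    omega

lemma hasFlipSeq_card_le (n : ℕ) : ∀ m T T', HasFlipSeq n m T T' → (T \ T').card ≤ m := by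
  intro m
  induction m with
  | zero =>
    intro T T' h
    have h' : T = T' := h
    subst h'; simp
  | succ m ih =>
    rintro T T' ⟨S, ⟨_, _, hTS, _⟩, hs⟩
    have h1 := ih S T' hs
    have h2 : T \ T' ⊆ (T \ S) ∪ (S \ T') := by
      intro x hx
      simp only [Finset.mem_sdiff, Finset.mem_union] at *
      by_cases h : x ∈ S <;> tauto
    have h3 := Finset.card_le_card h2
    have h4 := Finset.card_union_le (T \ S) (S \ T')
    omega

lemma case_big (n i j : ℕ) (hij : n - i = j) (hj : 3 ≤ j) (hn : j + 1 ≤ n) :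
    FlipDist n (genTri n i) (genTri n (i + 1)) 3 := by
  have hT0eq : genTri n i = T0 n j := by
    ext ⟨a, b⟩; rw [mem_genTri, mem_T0]; omega
  have hT3eq : T3 n j = genTri n (i + 1) := by
    ext ⟨a, b⟩; rw [mem_genTri, mem_T3]; omega
  have d01 : T0 n j \ T1 n j = {(j, j+2)} := by
    ext ⟨a, b⟩
    rw [Finset.mem_sdiff, mem_T0, mem_T1, Finset.mem_singleton, Prod.mk.injEq]; omega
  have d10 : T1 n j \ T0 n j = {(1, j+1)} := by
    ext ⟨a, b⟩
    rw [Finset.mem_sdiff, mem_T1, mem_T0, Finset.mem_singleton, Prod.mk.injEq]; omega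
  have d12 : T1 n j \ T2 n j = {(1, j+2)} := by
    ext ⟨a, b⟩
    rw [Finset.mem_sdiff, mem_T1, mem_T2, Finset.mem_singleton, Prod.mk.injEq]; omega
  have d21 : T2 n j \ T1 n j = {(0, j+1)} := by
    ext ⟨a, b⟩
    rw [Finset.mem_sdiff, mem_T2, mem_T1, Finset.mem_singleton, Prod.mk.injEq]; omega
  have d23 : T2 n j \ T3 n j = {(1, j)} := by
    ext ⟨a, b⟩
    rw [Finset.mem_sdiff, mem_T2, mem_T3, Finset.mem_singleton, Prod.mk.injEq]; omega
  have d32 : T3 n j \ T2 n j = {(j-1, j+1)} := by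
    ext ⟨a, b⟩
    rw [Finset.mem_sdiff, mem_T3, mem_T2, Finset.mem_singleton, Prod.mk.injEq]; omega
  constructor
  · rw [hT0eq]
    exact ⟨T1 n j, ⟨tri_T0 n j hj hn, tri_T1 n j hj hn, by rw [d01]; rfl, by rw [d10]; rfl⟩,
      T2 n j, ⟨tri_T1 n j hj hn, tri_T2 n j hj hn, by rw [d12]; rfl, by rw [d21]; rfl⟩,
      T3 n j, ⟨tri_T2 n j hj hn, tri_T3 n j hj hn, by rw [d23]; rfl, by rw [d32]; rfl⟩,
      hT3eq⟩
  · intro m hm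
    have h := hasFlipSeq_card_le n m _ _ hm
    have hd : genTri n i \ genTri n (i + 1) = {(j, j+2), (1, j+2), (1, j)} := by
      rw [hT0eq, ← hT3eq]
      ext ⟨a, b⟩
      rw [Finset.mem_sdiff, mem_T0, mem_T3]
      simp only [Finset.mem_insert, Finset.mem_singleton, Prod.mk.injEq]
      omega
    rw [hd] at h
    have hc : ({(j, j+2), (1, j+2), (1, j)} : Finset (ℕ × ℕ)).card = 3 := by
      rw [Finset.card_insert_of_notMem (by
            intro h; simp only [Finset.mem_insert, Finset.mem_singleton, Prod.mk.injEq] at h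
            omega),
          Finset.card_insert_of_notMem (by
            intro h; simp only [Finset.mem_singleton, Prod.mk.injEq] at h
            omega),
          Finset.card_singleton]
    omega

def S0 (n : ℕ) : Finset (ℕ × ℕ) := insert (2, 4) (insert (1, 4) (C n 2))
def S1 (n : ℕ) : Finset (ℕ × ℕ) := insert (1, 3) (insert (1, 4) (C n 2))
def S2 (n : ℕ) : Finset (ℕ × ℕ) := insert (1, 3) (insert (0, 3) (C n 2))

lemma mem_S0 {n a b : ℕ} : (a, b) ∈ S0 n ↔ (a = 2 ∧ b = 4) ∨ (a = 1 ∧ b = 4) ∨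
    (a = 0 ∧ 4 ≤ b ∧ b ≤ n) ∨ (a = 1 ∧ 3 ≤ b ∧ b ≤ 1) := by
  simp only [S0, Finset.mem_insert, Prod.mk.injEq, mem_C]

lemma mem_S1 {n a b : ℕ} : (a, b) ∈ S1 n ↔ (a = 1 ∧ b = 3) ∨ (a = 1 ∧ b = 4) ∨
    (a = 0 ∧ 4 ≤ b ∧ b ≤ n) ∨ (a = 1 ∧ 3 ≤ b ∧ b ≤ 1) := by
  simp only [S1, Finset.mem_insert, Prod.mk.injEq, mem_C]

lemma mem_S2 {n a b : ℕ} : (a, b) ∈ S2 n ↔ (a = 1 ∧ b = 3) ∨ (a = 0 ∧ b = 3) ∨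
    (a = 0 ∧ 4 ≤ b ∧ b ≤ n) ∨ (a = 1 ∧ 3 ≤ b ∧ b ≤ 1) := by
  simp only [S2, Finset.mem_insert, Prod.mk.injEq, mem_C]

lemma tri_S0 (n : ℕ) (hn : 3 ≤ n) : IsTriangulation n (S0 n) := by
  refine ⟨?_, ?_, ?_⟩
  · rintro ⟨a, b⟩ he; rw [mem_S0] at he; dsimp only [IsDiag]; omega
  · rintro ⟨a, b⟩ he ⟨c, d⟩ hf; rw [mem_S0] at he hf; dsimp only [Crosses]; omega
  · rw [S0, card_I2 (by intro h; rw [Prod.mk.injEq] at h; omega)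
      (by rw [mem_C]; omega) (by rw [mem_C]; omega), card_C (by omega)]
    omega

lemma tri_S1 (n : ℕ) (hn : 3 ≤ n) : IsTriangulation n (S1 n) := by
  refine ⟨?_, ?_, ?_⟩
  · rintro ⟨a, b⟩ he; rw [mem_S1] at he; dsimp only [IsDiag]; omega
  · rintro ⟨a, b⟩ he ⟨c, d⟩ hf; rw [mem_S1] at he hf; dsimp only [Crosses]; omega
  · rw [S1, card_I2 (by intro h; rw [Prod.mk.injEq] at h; omega)
      (by rw [mem_C]; omega) (by rw [mem_C]; omega), card_C (by omega)]
    omega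

lemma tri_S2 (n : ℕ) (hn : 3 ≤ n) : IsTriangulation n (S2 n) := by
  refine ⟨?_, ?_, ?_⟩
  · rintro ⟨a, b⟩ he; rw [mem_S2] at he; dsimp only [IsDiag]; omega
  · rintro ⟨a, b⟩ he ⟨c, d⟩ hf; rw [mem_S2] at he hf; dsimp only [Crosses]; omega
  · rw [S2, card_I2 (by intro h; rw [Prod.mk.injEq] at h; omega)
      (by rw [mem_C]; omega) (by rw [mem_C]; omega), card_C (by omega)]
    omega

lemma case_small (n : ℕ) (hn : 3 ≤ n) :
    FlipDist n (genTri n (n - 2)) (genTri n (n - 1)) 2 := by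
  have hS0eq : genTri n (n - 2) = S0 n := by
    ext ⟨a, b⟩; rw [mem_genTri, mem_S0]; omega
  have hS2eq : S2 n = genTri n (n - 1) := by
    ext ⟨a, b⟩; rw [mem_genTri, mem_S2]; omega
  have d01 : S0 n \ S1 n = {(2, 4)} := by
    ext ⟨a, b⟩
    rw [Finset.mem_sdiff, mem_S0, mem_S1, Finset.mem_singleton, Prod.mk.injEq]; omega
  have d10 : S1 n \ S0 n = {(1, 3)} := by
    ext ⟨a, b⟩
    rw [Finset.mem_sdiff, mem_S1, mem_S0, Finset.mem_singleton, Prod.mk.injEq]; omega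
  have d12 : S1 n \ S2 n = {(1, 4)} := by
    ext ⟨a, b⟩
    rw [Finset.mem_sdiff, mem_S1, mem_S2, Finset.mem_singleton, Prod.mk.injEq]; omega
  have d21 : S2 n \ S1 n = {(0, 3)} := by
    ext ⟨a, b⟩
    rw [Finset.mem_sdiff, mem_S2, mem_S1, Finset.mem_singleton, Prod.mk.injEq]; omega
  constructor
  · rw [hS0eq]
    exact ⟨S1 n, ⟨tri_S0 n hn, tri_S1 n hn, by rw [d01]; rfl, by rw [d10]; rfl⟩,
      S2 n, ⟨tri_S1 n hn, tri_S2 n hn, by rw [d12]; rfl, by rw [d21]; rfl⟩, hS2eq⟩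
  · intro m hm
    have h := hasFlipSeq_card_le n m _ _ hm
    have hd : genTri n (n - 2) \ genTri n (n - 1) = {(2, 4), (1, 4)} := by
      rw [hS0eq, ← hS2eq]
      ext ⟨a, b⟩
      rw [Finset.mem_sdiff, mem_S0, mem_S2]
      simp only [Finset.mem_insert, Finset.mem_singleton, Prod.mk.injEq]
      omega
    rw [hd] at h
    have hc : ({(2, 4), (1, 4)} : Finset (ℕ × ℕ)).card = 2 := by decide
    omega

end Stmt9Aux

/-- The flip distance between the triangulations corresponding to
the generators `u_i` and `u_{i+1}` of `TL_n` equals `3` if `i ≠ n-2` and `2`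
if `i = n-2`, for `1 ≤ i ≤ n-2`. -/
theorem stmt9 (n i : ℕ) (h1 : 1 ≤ i) (h2 : i ≤ n - 2) :
    FlipDist n (genTri n i) (genTri n (i + 1)) (if i = n - 2 then 2 else 3) := by
  have hn3 : 3 ≤ n := by omega
  by_cases hc : i = n - 2
  · rw [if_pos hc]
    subst hc
    have h21 : n - 2 + 1 = n - 1 := by omega
    rw [h21]
    exact Stmt9Aux.case_small n hn3
  · rw [if_neg hc]
    exact Stmt9Aux.case_big n i (n - i) rfl (by omega) (by omega)
end

section
/- For 1 ≤ i ≤ n−1 and k ≥ 2 with i+k ≤ n−1, the flip distance between the triangulations corresponding to the Temperley-Lieb generators u_i and u_{i+k} equals k+1 if i ≠ n−k−1 and equals k if i = n−k−1. -/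
def fan0 (n m : ℕ) : Finset (ℕ × ℕ) := (Finset.Icc m n).image (fun t => ((0 : ℕ), t))
def fan1 (m : ℕ) : Finset (ℕ × ℕ) := (Finset.Icc 3 m).image (fun t => ((1 : ℕ), t))
def G (n a : ℕ) : Finset (ℕ × ℕ) := {(a, a + 2), (1, a + 2)} ∪ fan0 n (a + 2) ∪ fan1 a

lemma mem_fan0 {n m x y : ℕ} : (x, y) ∈ fan0 n m ↔ x = 0 ∧ m ≤ y ∧ y ≤ n := by
  simp [fan0, Prod.ext_iff]; omega

lemma mem_fan1 {m x y : ℕ} : (x, y) ∈ fan1 m ↔ x = 1 ∧ 3 ≤ y ∧ y ≤ m := by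
  simp [fan1, Prod.ext_iff]; omega

lemma mem_G {n a x y : ℕ} : (x, y) ∈ G n a ↔
    (x = a ∧ y = a + 2) ∨ (x = 1 ∧ y = a + 2) ∨
    (x = 0 ∧ a + 2 ≤ y ∧ y ≤ n) ∨ (x = 1 ∧ 3 ≤ y ∧ y ≤ a) := by
  simp [G, mem_fan0, mem_fan1, Finset.mem_union, Prod.ext_iff]


def U (n a : ℕ) : Finset (ℕ × ℕ) := {(a, a + 2), (0, a)} ∪ fan0 n (a + 2) ∪ fan1 a
def R (n m : ℕ) : Finset (ℕ × ℕ) := fan0 n m ∪ fan1 m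

lemma mem_U {n a x y : ℕ} : (x, y) ∈ U n a ↔
    (x = a ∧ y = a + 2) ∨ (x = 0 ∧ y = a) ∨
    (x = 0 ∧ a + 2 ≤ y ∧ y ≤ n) ∨ (x = 1 ∧ 3 ≤ y ∧ y ≤ a) := by
  simp [U, mem_fan0, mem_fan1, Finset.mem_union, Prod.ext_iff]

lemma mem_R {n m x y : ℕ} : (x, y) ∈ R n m ↔
    (x = 0 ∧ m ≤ y ∧ y ≤ n) ∨ (x = 1 ∧ 3 ≤ y ∧ y ≤ m) := by
  simp [R, mem_fan0, mem_fan1, Finset.mem_union]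

lemma inj_pair (c : ℕ) : Function.Injective (fun t : ℕ => ((c, t) : ℕ × ℕ)) := by
  intro x y h; simpa using h

lemma card_fan0 (n m : ℕ) : (fan0 n m).card = n + 1 - m := by
  rw [fan0, Finset.card_image_of_injective _ (inj_pair 0), Nat.card_Icc]

lemma card_fan1 (m : ℕ) : (fan1 m).card = m - 2 := by
  rw [fan1, Finset.card_image_of_injective _ (inj_pair 1), Nat.card_Icc]; omega

lemma card_G {n a : ℕ} (h3 : 2 ≤ a) (han : a + 1 ≤ n) : (G n a).card = n - 1 := by
  rw [G, Finset.card_union_of_disjoint, Finset.card_union_of_disjoint,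
    card_fan0, card_fan1]
  · rw [Finset.card_insert_of_notMem (by simp [Prod.ext_iff]; try omega),
      Finset.card_singleton]; omega
  · rw [Finset.disjoint_left]; rintro ⟨x, y⟩ hx hy
    rw [mem_fan0] at hy; simp [Prod.ext_iff] at hx; omega
  · rw [Finset.disjoint_left]; rintro ⟨x, y⟩ hx hy
    rw [mem_fan1] at hy
    simp only [Finset.mem_union, Finset.mem_insert, Finset.mem_singleton, Prod.ext_iff] at hx
    rcases hx with h | h
    · omega
    · rw [mem_fan0] at h; omega

lemma card_U {n a : ℕ} (h3 : 3 ≤ a) (han : a + 1 ≤ n) : (U n a).card = n - 1 := by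
  rw [U, Finset.card_union_of_disjoint, Finset.card_union_of_disjoint,
    card_fan0, card_fan1]
  · rw [Finset.card_insert_of_notMem (by simp [Prod.ext_iff]; try omega),
      Finset.card_singleton]; omega
  · rw [Finset.disjoint_left]; rintro ⟨x, y⟩ hx hy
    rw [mem_fan0] at hy; simp [Prod.ext_iff] at hx; omega
  · rw [Finset.disjoint_left]; rintro ⟨x, y⟩ hx hy
    rw [mem_fan1] at hy
    simp only [Finset.mem_union, Finset.mem_insert, Finset.mem_singleton, Prod.ext_iff] at hx
    rcases hx with h | h
    · omega
    · rw [mem_fan0] at h; omega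

lemma card_R {n m : ℕ} (h3 : 3 ≤ m) (hmn : m ≤ n) : (R n m).card = n - 1 := by
  rw [R, Finset.card_union_of_disjoint, card_fan0, card_fan1]
  · omega
  · rw [Finset.disjoint_left]; rintro ⟨x, y⟩ hx hy
    rw [mem_fan0] at hx; rw [mem_fan1] at hy; omega

lemma tri_G {n a : ℕ} (h3 : 2 ≤ a) (han : a + 1 ≤ n) : IsTriangulation n (G n a) := by
  refine ⟨?_, ?_, card_G h3 han⟩
  · rintro ⟨x, y⟩ h; rw [mem_G] at h; simp only [IsDiag]; omega
  · rintro ⟨x, y⟩ hx ⟨u, v⟩ hv; rw [mem_G] at hx hv; simp only [Crosses]; omega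

lemma tri_U {n a : ℕ} (h3 : 3 ≤ a) (han : a + 1 ≤ n) : IsTriangulation n (U n a) := by
  refine ⟨?_, ?_, card_U h3 han⟩
  · rintro ⟨x, y⟩ h; rw [mem_U] at h; simp only [IsDiag]; omega
  · rintro ⟨x, y⟩ hx ⟨u, v⟩ hv; rw [mem_U] at hx hv; simp only [Crosses]; omega

lemma tri_R {n m : ℕ} (h3 : 3 ≤ m) (hmn : m ≤ n) : IsTriangulation n (R n m) := by
  refine ⟨?_, ?_, card_R h3 hmn⟩
  · rintro ⟨x, y⟩ h; rw [mem_R] at h; simp only [IsDiag]; omega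
  · rintro ⟨x, y⟩ hx ⟨u, v⟩ hv; rw [mem_R] at hx hv; simp only [Crosses]; omega


lemma hfs_trans {n m1 m2 : ℕ} {T S T' : Finset (ℕ × ℕ)} (h1 : HasFlipSeq n m1 T S)
    (h2 : HasFlipSeq n m2 S T') : HasFlipSeq n (m1 + m2) T T' := by
  induction m1 generalizing T with
  | zero => rw [Nat.zero_add]; rwa [show T = S from h1]
  | succ m ih =>
    obtain ⟨S1, hadj, hrest⟩ := h1
    rw [show m + 1 + m2 = (m + m2) + 1 by omega]
    exact ⟨S1, hadj, ih hrest⟩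

lemma sdiff_card_le {n m : ℕ} {T T' : Finset (ℕ × ℕ)} (h : HasFlipSeq n m T T') :
    (T \ T').card ≤ m := by
  induction m generalizing T with
  | zero => rw [show T = T' from h]; simp
  | succ m ih =>
    obtain ⟨S, hadj, hrest⟩ := h
    have h1 : T \ T' ⊆ (T \ S) ∪ (S \ T') := by
      intro x hx
      simp only [Finset.mem_sdiff, Finset.mem_union] at *
      tauto
    have h2 := (Finset.card_le_card h1).trans (Finset.card_union_le _ _)
    have h3 := ih hrest
    have h4 := hadj.2.2.1
    omega

-- flip 1 : G n a → U n a
lemma flip1 {n a : ℕ} (h3 : 3 ≤ a) (han : a + 1 ≤ n) : FlipAdj n (G n a) (U n a) := by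
  refine ⟨tri_G (by omega) han, tri_U h3 han, ?_, ?_⟩
  · have : G n a \ U n a = {(1, a + 2)} := by
      ext ⟨x, y⟩
      simp only [Finset.mem_sdiff, mem_G, mem_U, Finset.mem_singleton, Prod.ext_iff]
      omega
    rw [this, Finset.card_singleton]
  · have : U n a \ G n a = {(0, a)} := by
      ext ⟨x, y⟩
      simp only [Finset.mem_sdiff, mem_G, mem_U, Finset.mem_singleton, Prod.ext_iff]
      omega
    rw [this, Finset.card_singleton]

-- flip 2 : U n a → R n a
lemma flip2 {n a : ℕ} (h3 : 3 ≤ a) (han : a + 1 ≤ n) : FlipAdj n (U n a) (R n a) := by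
  refine ⟨tri_U h3 han, tri_R h3 (by omega), ?_, ?_⟩
  · have : U n a \ R n a = {(a, a + 2)} := by
      ext ⟨x, y⟩
      simp only [Finset.mem_sdiff, mem_U, mem_R, Finset.mem_singleton, Prod.ext_iff]
      omega
    rw [this, Finset.card_singleton]
  · have : R n a \ U n a = {(0, a + 1)} := by
      ext ⟨x, y⟩
      simp only [Finset.mem_sdiff, mem_U, mem_R, Finset.mem_singleton, Prod.ext_iff]
      omega
    rw [this, Finset.card_singleton]

-- flip R : R n (m+1) → R n m
lemma flipR {n m : ℕ} (h3 : 3 ≤ m) (hmn : m + 1 ≤ n) : FlipAdj n (R n (m + 1)) (R n m) := by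
  refine ⟨tri_R (by omega) hmn, tri_R h3 (by omega), ?_, ?_⟩
  · have : R n (m + 1) \ R n m = {(1, m + 1)} := by
      ext ⟨x, y⟩
      simp only [Finset.mem_sdiff, mem_R, Finset.mem_singleton, Prod.ext_iff]
      omega
    rw [this, Finset.card_singleton]
  · have : R n m \ R n (m + 1) = {(0, m)} := by
      ext ⟨x, y⟩
      simp only [Finset.mem_sdiff, mem_R, Finset.mem_singleton, Prod.ext_iff]
      omega
    rw [this, Finset.card_singleton]

lemma R_seq {n : ℕ} (d : ℕ) {m : ℕ} (h3 : 3 ≤ m) (hmn : m + d ≤ n) :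
    HasFlipSeq n d (R n (m + d)) (R n m) := by
  induction d with
  | zero => rfl
  | succ d ih =>
    exact ⟨R n (m + d), by
      have := flipR (n := n) (m := m + d) (by omega) (by omega)
      rwa [show m + (d+1) = (m + d) + 1 by omega], ih (by omega)⟩

-- flip last : R n (b+2) → G n b  (b ≥ 2)
lemma flip3 {n b : ℕ} (hb : 2 ≤ b) (hbn : b + 3 ≤ n) : FlipAdj n (R n (b + 2)) (G n b) := by
  refine ⟨tri_R (by omega) (by omega), tri_G (by omega) (by omega), ?_, ?_⟩
  · have : R n (b + 2) \ G n b = {(1, b + 1)} := by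
      ext ⟨x, y⟩
      simp only [Finset.mem_sdiff, mem_R, mem_G, Finset.mem_singleton, Prod.ext_iff]
      omega
    rw [this, Finset.card_singleton]
  · have : G n b \ R n (b + 2) = {(b, b + 2)} := by
      ext ⟨x, y⟩
      simp only [Finset.mem_sdiff, mem_R, mem_G, Finset.mem_singleton, Prod.ext_iff]
      omega
    rw [this, Finset.card_singleton]

lemma G_one {n : ℕ} : G n 1 = R n 3 := by
  ext ⟨x, y⟩
  simp only [mem_G, mem_R]
  omega

lemma card_diff {n b k : ℕ} (h2 : 2 ≤ k) (hb : 2 ≤ b) (han : b + k + 1 ≤ n) :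
    (G n (b + k) \ G n b).card = k + 1 := by
  have : G n (b + k) \ G n b =
      insert (b + k, b + k + 2)
        ((insert (b + 1) (insert (b + k + 2) (Finset.Icc (b + 3) (b + k)))).image
          (fun t => ((1 : ℕ), t))) := by
    ext ⟨x, y⟩
    simp only [Finset.mem_sdiff, mem_G, Finset.mem_insert, Finset.mem_image,
      Finset.mem_Icc, Prod.ext_iff]
    constructor
    · intro ⟨h1, h1'⟩
      rcases h1 with h | h | h | h
      · left; omega
      · right; exact ⟨y, by omega, by omega⟩
      · exfalso; omega
      · right; exact ⟨y, by omega, by omega⟩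
    · rintro (h | ⟨t, ht, hx, hy⟩) <;> omega
  rw [this, Finset.card_insert_of_notMem, Finset.card_image_of_injective _ (inj_pair 1),
    Finset.card_insert_of_notMem, Finset.card_insert_of_notMem, Nat.card_Icc]
  · omega
  · simp [Finset.mem_Icc]; try omega
  · simp [Finset.mem_Icc]; try omega
  · simp only [Finset.mem_image, Finset.mem_insert, Finset.mem_Icc, Prod.ext_iff]
    rintro ⟨t, ht, hx, hy⟩; omega

lemma card_diff1 {n k : ℕ} (h2 : 2 ≤ k) (han : k + 2 ≤ n) :
    (G n (k + 1) \ G n 1).card = k := by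
  have : G n (k + 1) \ G n 1 =
      insert (k + 1, k + 3)
        ((insert (k + 3) (Finset.Icc 4 (k + 1))).image (fun t => ((1 : ℕ), t))) := by
    ext ⟨x, y⟩
    simp only [Finset.mem_sdiff, mem_G, Finset.mem_insert, Finset.mem_image,
      Finset.mem_Icc, Prod.ext_iff]
    constructor
    · intro ⟨h1, h1'⟩
      rcases h1 with h | h | h | h
      · left; omega
      · right; exact ⟨y, by omega, by omega⟩
      · exfalso; omega
      · right; exact ⟨y, by omega, by omega⟩
    · rintro (h | ⟨t, ht, hx, hy⟩) <;> omega
  rw [this, Finset.card_insert_of_notMem, Finset.card_image_of_injective _ (inj_pair 1),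
    Finset.card_insert_of_notMem, Nat.card_Icc]
  · omega
  · simp [Finset.mem_Icc]; try omega
  · simp only [Finset.mem_image, Finset.mem_insert, Finset.mem_Icc, Prod.ext_iff]
    rintro ⟨t, ht, hx, hy⟩; omega

lemma upper {n b k : ℕ} (h2 : 2 ≤ k) (hb : 1 ≤ b) (han : b + k + 1 ≤ n) :
    HasFlipSeq n (if b = 1 then k else k + 1) (G n (b + k)) (G n b) := by
  set a := b + k with ha
  have h1 : HasFlipSeq n 2 (G n a) (R n a) :=
    ⟨U n a, flip1 (by omega) (by omega), R n a, flip2 (by omega) (by omega), rfl⟩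
  by_cases hb1 : b = 1
  · subst hb1
    rw [if_pos rfl]
    have h2' : HasFlipSeq n (k - 2) (R n a) (R n 3) := by
      have := R_seq (n := n) (k - 2) (m := 3) (by omega) (by omega)
      rwa [show 3 + (k - 2) = a by omega] at this
    have := hfs_trans h1 h2'
    rw [G_one]
    rwa [show 2 + (k - 2) = k by omega] at this
  · rw [if_neg hb1]
    have h2' : HasFlipSeq n (k - 2) (R n a) (R n (b + 2)) := by
      have := R_seq (n := n) (k - 2) (m := b + 2) (by omega) (by omega)
      rwa [show b + 2 + (k - 2) = a by omega] at this
    have h3' : HasFlipSeq n 1 (R n (b + 2)) (G n b) :=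
      ⟨G n b, flip3 (by omega) (by omega), rfl⟩
    have := hfs_trans (hfs_trans h1 h2') h3'
    rwa [show 2 + (k - 2) + 1 = k + 1 by omega] at this


lemma main {n b k : ℕ} (h2 : 2 ≤ k) (hb : 1 ≤ b) (han : b + k + 1 ≤ n) :
    FlipDist n (G n (b + k)) (G n b) (if b = 1 then k else k + 1) := by
  refine ⟨upper h2 hb han, fun m hm => ?_⟩
  have hc := sdiff_card_le hm
  by_cases hb1 : b = 1
  · rw [if_pos hb1]; subst hb1
    rw [show (1 : ℕ) + k = k + 1 by omega] at hc
    have := card_diff1 (n := n) h2 (by omega)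
    omega
  · rw [if_neg hb1]
    have := card_diff h2 (by omega) han
    omega

/-- For `1 ≤ i`, `k ≥ 2`, `i + k ≤ n-1`, the flip distance
between the triangulations corresponding to `u_i` and `u_{i+k}` equals `k+1`
if `i ≠ n-k-1` and `k` if `i = n-k-1`. -/
theorem stmt10 (n i k : ℕ) (h1 : 1 ≤ i) (h2 : 2 ≤ k) (h3 : i + k ≤ n - 1) :
    FlipDist n (genTri n i) (genTri n (i + k)) (if i = n - k - 1 then k else k + 1) := by
  have hn : i + k + 1 ≤ n := by omega
  have e1 : genTri n i = G n (n - (i + k) + k) := by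
    rw [show genTri n i = G n (n - i) from rfl, show n - i = n - (i + k) + k by omega]
  have e2 : genTri n (i + k) = G n (n - (i + k)) := rfl
  rw [e1, e2, show (if i = n - k - 1 then k else k + 1)
      = (if n - (i + k) = 1 then k else k + 1) by
    by_cases h : i = n - k - 1
    · rw [if_pos h, if_pos (by omega)]
    · rw [if_neg h, if_neg (by omega)]]
  exact main h2 (by omega) (by omega)
end

section
/- For 1 ≤ i ≤ n−1, the Temperley-Lieb generator u_i corresponds under the outdegree bijection to the triangulation of the convex (n+2)-gon consisting of: the diagonal p_{n−i+1}p_{n−i+3}, the diagonal p_2p_{n−i+3}, the fan {p_1p_j : n−i+3 ≤ j ≤ n+1} at p_1, and the fan {p_2p_j : 4 ≤ j ≤ n−i+1} at p_2. -/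
/-- Number of zeros of the 0/1-sequence `B` strictly before position `m`. -/
def zerosBeforeN (B : ℕ → ℕ) (m : ℕ) : ℕ :=
  ((Finset.range m).filter (fun t => B t = 0)).card

/-- The bijection of AABV2017 on outdegree sequences: `BtoDn n B i` is the
number of 1s of `B` strictly between the `i`-th and `(i+1)`-st zero (0-indexed;
for `i = 0` the number of 1s before the first zero), i.e. `d_{i+1}`. -/
def BtoDn (n : ℕ) (B : ℕ → ℕ) (i : ℕ) : ℕ :=
  ((Finset.range (2 * n)).filter (fun m => B m = 1 ∧ zerosBeforeN B m = i)).card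

lemma mem_genMatch (n i a b : ℕ) :
    (a, b) ∈ genMatch n i ↔
      (a = i - 1 ∧ b = i) ∨ (a = 2 * n - i - 1 ∧ b = 2 * n - i) ∨
      (a < n ∧ a ≠ i - 1 ∧ a ≠ i ∧ b = 2 * n - 1 - a) := by
  simp only [genMatch, Finset.mem_union, Finset.mem_insert, Finset.mem_singleton,
    Finset.mem_image, Finset.mem_filter, Finset.mem_range, Prod.mk.injEq]
  constructor
  · rintro ((⟨rfl, rfl⟩ | ⟨rfl, rfl⟩) | ⟨t, ⟨ht, hx, hy⟩, rfl, rfl⟩) <;> tauto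
  · rintro (⟨rfl, rfl⟩ | ⟨rfl, rfl⟩ | ⟨h, hx, hy, rfl⟩)
    · tauto
    · tauto
    · exact Or.inr ⟨a, ⟨h, hx, hy⟩, rfl, rfl⟩

lemma Bval (n i : ℕ) (h1 : 1 ≤ i) (hn : i + 1 ≤ n) (v : ℕ) :
    matchOutdeg (genMatch n i) v =
      if (v < n ∧ v ≠ i) ∨ v = 2 * n - i - 1 then 1 else 0 := by
  unfold matchOutdeg
  split_ifs with hc
  · rw [Finset.card_eq_one]
    by_cases hv1 : v = 2 * n - i - 1
    · exact ⟨(2 * n - i - 1, 2 * n - i), by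
        ext ⟨a, b⟩
        simp only [Finset.mem_filter, mem_genMatch, Finset.mem_singleton, Prod.mk.injEq]
        omega⟩
    by_cases hv2 : v = i - 1
    · exact ⟨(i - 1, i), by
        ext ⟨a, b⟩
        simp only [Finset.mem_filter, mem_genMatch, Finset.mem_singleton, Prod.mk.injEq]
        omega⟩
    · exact ⟨(v, 2 * n - 1 - v), by
        ext ⟨a, b⟩
        simp only [Finset.mem_filter, mem_genMatch, Finset.mem_singleton, Prod.mk.injEq]
        omega⟩
  · rw [Finset.card_eq_zero, Finset.filter_eq_empty_iff]
    rintro ⟨a, b⟩ h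
    rw [mem_genMatch] at h
    simp only
    omega

lemma Bone (n i : ℕ) (h1 : 1 ≤ i) (hn : i + 1 ≤ n) (v : ℕ) :
    matchOutdeg (genMatch n i) v = 1 ↔ ((v < n ∧ v ≠ i) ∨ v = 2 * n - i - 1) := by
  rw [Bval n i h1 hn]; split_ifs with h <;> simp [h]

lemma Bzero (n i : ℕ) (h1 : 1 ≤ i) (hn : i + 1 ≤ n) (v : ℕ) :
    matchOutdeg (genMatch n i) v = 0 ↔ ¬((v < n ∧ v ≠ i) ∨ v = 2 * n - i - 1) := by
  rw [Bval n i h1 hn]; split_ifs with h <;> simp [h]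

lemma zB_val (n i : ℕ) (h1 : 1 ≤ i) (hn : i + 1 ≤ n) (m : ℕ)
    (hm : (m < n ∧ m ≠ i) ∨ m = 2 * n - i - 1) :
    zerosBeforeN (matchOutdeg (genMatch n i)) m =
      if m < i then 0 else if m < n then 1 else n - i := by
  unfold zerosBeforeN
  split_ifs with hmi hmn
  · rw [Finset.card_eq_zero, Finset.filter_eq_empty_iff]
    intro t ht
    rw [Finset.mem_range] at ht
    rw [Bzero n i h1 hn]
    omega
  · have : (Finset.range m).filter (fun t => matchOutdeg (genMatch n i) t = 0) = {i} := by
      ext t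
      simp only [Finset.mem_filter, Finset.mem_range, Finset.mem_singleton,
        Bzero n i h1 hn]
      omega
    rw [this, Finset.card_singleton]
  · have hm' : m = 2 * n - i - 1 := by omega
    have : (Finset.range m).filter (fun t => matchOutdeg (genMatch n i) t = 0) =
        insert i (Finset.Icc n (2 * n - i - 2)) := by
      ext t
      simp only [Finset.mem_filter, Finset.mem_range, Finset.mem_insert, Finset.mem_Icc,
        Bzero n i h1 hn]
      omega
    rw [this, Finset.card_insert_of_notMem (by simp only [Finset.mem_Icc]; omega),
      Nat.card_Icc]
    omega

lemma lhs_val (n i : ℕ) (h1 : 1 ≤ i) (hn : i + 1 ≤ n) (t : ℕ) :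
    BtoDn n (matchOutdeg (genMatch n i)) t =
      (if t = 0 then i else 0) + (if t = 1 then n - i - 1 else 0) +
        (if t = n - i then 1 else 0) := by
  unfold BtoDn
  by_cases ht0 : t = 0
  · subst ht0
    have hset : (Finset.range (2 * n)).filter
        (fun m => matchOutdeg (genMatch n i) m = 1 ∧
          zerosBeforeN (matchOutdeg (genMatch n i)) m = 0) = Finset.range i := by
      ext m
      simp only [Finset.mem_filter, Finset.mem_range, Bone n i h1 hn]
      constructor
      · rintro ⟨hm, hone, hz⟩
        rw [zB_val n i h1 hn m hone] at hz
        split_ifs at hz <;> omega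
      · intro hmi
        have hone : (m < n ∧ m ≠ i) ∨ m = 2 * n - i - 1 := by omega
        refine ⟨by omega, hone, ?_⟩
        rw [zB_val n i h1 hn m hone]
        split_ifs <;> first | exact (‹False›).elim | omega
    rw [hset, Finset.card_range]
    split_ifs <;> first | exact (‹False›).elim | omega
  by_cases ht1 : t = 1
  · subst ht1
    by_cases hi : i = n - 1
    · have hset : (Finset.range (2 * n)).filter
          (fun m => matchOutdeg (genMatch n i) m = 1 ∧
            zerosBeforeN (matchOutdeg (genMatch n i)) m = 1) = {n} := by
        ext m
        simp only [Finset.mem_filter, Finset.mem_range, Finset.mem_singleton,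
          Bone n i h1 hn]
        constructor
        · rintro ⟨hm, hone, hz⟩
          rw [zB_val n i h1 hn m hone] at hz
          split_ifs at hz <;> omega
        · intro hmn
          have hone : (m < n ∧ m ≠ i) ∨ m = 2 * n - i - 1 := by omega
          refine ⟨by omega, hone, ?_⟩
          rw [zB_val n i h1 hn m hone]
          split_ifs <;> first | exact (‹False›).elim | omega
      rw [hset, Finset.card_singleton]
      split_ifs <;> first | exact (‹False›).elim | omega
    · have hset : (Finset.range (2 * n)).filter
          (fun m => matchOutdeg (genMatch n i) m = 1 ∧
            zerosBeforeN (matchOutdeg (genMatch n i)) m = 1) = Finset.Ioo i n := by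
        ext m
        simp only [Finset.mem_filter, Finset.mem_range, Finset.mem_Ioo,
          Bone n i h1 hn]
        constructor
        · rintro ⟨hm, hone, hz⟩
          rw [zB_val n i h1 hn m hone] at hz
          split_ifs at hz <;> omega
        · intro hmn
          have hone : (m < n ∧ m ≠ i) ∨ m = 2 * n - i - 1 := by omega
          refine ⟨by omega, hone, ?_⟩
          rw [zB_val n i h1 hn m hone]
          split_ifs <;> first | exact (‹False›).elim | omega
      rw [hset, Nat.card_Ioo]
      split_ifs <;> first | exact (‹False›).elim | omega
  by_cases hti : t = n - i
  · have hset : (Finset.range (2 * n)).filter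
        (fun m => matchOutdeg (genMatch n i) m = 1 ∧
          zerosBeforeN (matchOutdeg (genMatch n i)) m = t) = {2 * n - i - 1} := by
      ext m
      simp only [Finset.mem_filter, Finset.mem_range, Finset.mem_singleton,
        Bone n i h1 hn]
      constructor
      · rintro ⟨hm, hone, hz⟩
        rw [zB_val n i h1 hn m hone] at hz
        split_ifs at hz <;> omega
      · intro hm
        have hone : (m < n ∧ m ≠ i) ∨ m = 2 * n - i - 1 := by omega
        refine ⟨by omega, hone, ?_⟩
        rw [zB_val n i h1 hn m hone]
        split_ifs <;> first | exact (‹False›).elim | omega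
    rw [hset, Finset.card_singleton]
    split_ifs <;> first | exact (‹False›).elim | omega
  · have hset : (Finset.range (2 * n)).filter
        (fun m => matchOutdeg (genMatch n i) m = 1 ∧
          zerosBeforeN (matchOutdeg (genMatch n i)) m = t) = ∅ := by
      rw [Finset.filter_eq_empty_iff]
      intro m hm
      rw [Finset.mem_range] at hm
      rw [Bone n i h1 hn]
      rintro ⟨hone, hz⟩
      rw [zB_val n i h1 hn m hone] at hz
      split_ifs at hz <;> omega
    rw [hset, Finset.card_empty]
    split_ifs <;> first | exact (‹False›).elim | omega

lemma mem_genTri (n i a b : ℕ) :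
    (a, b) ∈ genTri n i ↔
      (a = n - i ∧ b = n - i + 2) ∨ (a = 1 ∧ b = n - i + 2) ∨
      (a = 0 ∧ n - i + 2 ≤ b ∧ b ≤ n) ∨ (a = 1 ∧ 3 ≤ b ∧ b ≤ n - i) := by
  simp only [genTri, Finset.mem_union, Finset.mem_insert, Finset.mem_singleton,
    Finset.mem_image, Finset.mem_Icc, Prod.mk.injEq]
  constructor
  · rintro (((⟨rfl, rfl⟩ | ⟨rfl, rfl⟩) | ⟨t, ht, rfl, rfl⟩) | ⟨t, ht, rfl, rfl⟩) <;> tauto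
  · rintro (⟨rfl, rfl⟩ | ⟨rfl, rfl⟩ | ⟨rfl, h⟩ | ⟨rfl, h⟩)
    · tauto
    · tauto
    · exact Or.inl (Or.inr ⟨b, h, rfl, rfl⟩)
    · exact Or.inr ⟨b, h, rfl, rfl⟩

lemma inj0 : Function.Injective (fun s : ℕ => ((0 : ℕ), s)) := by
  intro x y h; simpa using h
lemma inj1 : Function.Injective (fun s : ℕ => ((1 : ℕ), s)) := by
  intro x y h; simpa using h

lemma rhs_val (n i : ℕ) (h1 : 1 ≤ i) (hn : i + 1 ≤ n) (t : ℕ) :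
    triOutdeg (genTri n i) t =
      (if t = 0 then i else 0) + (if t = 1 then n - i - 1 else 0) +
        (if t = n - i then 1 else 0) := by
  unfold triOutdeg
  by_cases ht0 : t = 0
  · subst ht0
    have hset : (genTri n i).filter (fun e => e.1 = 0) =
        (Finset.Icc (n - i + 2) n).image (fun s => ((0 : ℕ), s)) := by
      ext ⟨a, b⟩
      simp only [Finset.mem_filter, mem_genTri, Finset.mem_image, Finset.mem_Icc,
        Prod.mk.injEq]
      constructor
      · rintro ⟨h, rfl⟩
        exact ⟨b, by omega, rfl, rfl⟩
      · rintro ⟨s, hs, rfl, rfl⟩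
        exact ⟨by omega, rfl⟩
    rw [hset, Finset.card_image_of_injective _ inj0, Nat.card_Icc]
    split_ifs <;> first | exact (‹False›).elim | omega
  by_cases ht1 : t = 1
  · subst ht1
    have hset : (genTri n i).filter (fun e => e.1 = 1) =
        insert ((1 : ℕ), n - i + 2) ((Finset.Icc 3 (n - i)).image (fun s => ((1 : ℕ), s))) := by
      ext ⟨a, b⟩
      simp only [Finset.mem_filter, mem_genTri, Finset.mem_insert, Finset.mem_image,
        Finset.mem_Icc, Prod.mk.injEq]
      constructor
      · rintro ⟨h, rfl⟩
        rcases h with ⟨h', rfl⟩ | ⟨-, rfl⟩ | ⟨h', -⟩ | ⟨-, hb⟩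
        · exact Or.inl ⟨rfl, rfl⟩
        · exact Or.inl ⟨rfl, rfl⟩
        · omega
        · exact Or.inr ⟨b, hb, rfl, rfl⟩
      · rintro (⟨rfl, rfl⟩ | ⟨s, hs, rfl, rfl⟩)
        · exact ⟨Or.inr (Or.inl ⟨rfl, rfl⟩), rfl⟩
        · exact ⟨Or.inr (Or.inr (Or.inr ⟨rfl, hs⟩)), rfl⟩
    rw [hset, Finset.card_insert_of_notMem (by
        intro hmem
        simp only [Finset.mem_image, Finset.mem_Icc, Prod.mk.injEq] at hmem
        rcases hmem with ⟨s, hs, -, rfl⟩; omega),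
      Finset.card_image_of_injective _ inj1, Nat.card_Icc]
    split_ifs <;> first | exact (‹False›).elim | omega
  by_cases hti : t = n - i
  · have hset : (genTri n i).filter (fun e => e.1 = t) = {(n - i, n - i + 2)} := by
      ext ⟨a, b⟩
      simp only [Finset.mem_filter, mem_genTri, Finset.mem_singleton, Prod.mk.injEq]
      omega
    rw [hset, Finset.card_singleton]
    split_ifs <;> first | exact (‹False›).elim | omega
  · have hset : (genTri n i).filter (fun e => e.1 = t) = ∅ := by
      rw [Finset.filter_eq_empty_iff]
      rintro ⟨a, b⟩ h
      rw [mem_genTri] at h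
      simp only
      omega
    rw [hset, Finset.card_empty]
    split_ifs <;> first | exact (‹False›).elim | omega

lemma genTri_isTri (n i : ℕ) (h1 : 1 ≤ i) (hn : i + 1 ≤ n) :
    IsTriangulation n (genTri n i) := by
  refine ⟨?_, ?_, ?_⟩
  · rintro ⟨a, b⟩ h
    rw [mem_genTri] at h
    unfold IsDiag
    dsimp only
    omega
  · rintro ⟨a, b⟩ ha ⟨c, d⟩ hc
    rw [mem_genTri] at ha hc
    unfold Crosses
    dsimp only
    omega
  · by_cases hi : i = n - 1
    · have hgt : genTri n i = insert ((1 : ℕ), 3)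
          ((Finset.Icc 3 n).image (fun s => ((0 : ℕ), s))) := by
        ext ⟨a, b⟩
        rw [mem_genTri]
        simp only [Finset.mem_insert, Finset.mem_image, Finset.mem_Icc, Prod.mk.injEq]
        constructor
        · rintro (⟨rfl, rfl⟩ | ⟨rfl, rfl⟩ | ⟨rfl, hb⟩ | ⟨rfl, hb⟩) <;>
            first
            | (left; constructor <;> omega)
            | (right; exact ⟨b, by omega, rfl, rfl⟩)
            | omega
        · rintro (⟨rfl, rfl⟩ | ⟨s, hs, rfl, rfl⟩)
          · left; omega
          · right; right; left; exact ⟨rfl, by omega⟩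
      rw [hgt, Finset.card_insert_of_notMem (by
          intro hmem
          simp only [Finset.mem_image, Finset.mem_Icc, Prod.mk.injEq] at hmem
          rcases hmem with ⟨s, hs, h0, -⟩; omega),
        Finset.card_image_of_injective _ inj0, Nat.card_Icc]
      omega
    · have hgt : genTri n i = insert (n - i, n - i + 2) (insert ((1 : ℕ), n - i + 2)
          (((Finset.Icc (n - i + 2) n).image (fun s => ((0 : ℕ), s))) ∪
            ((Finset.Icc 3 (n - i)).image (fun s => ((1 : ℕ), s))))) := by
        ext ⟨a, b⟩
        rw [mem_genTri]
        simp only [Finset.mem_insert, Finset.mem_union, Finset.mem_image, Finset.mem_Icc,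
          Prod.mk.injEq]
        constructor
        · rintro (⟨rfl, rfl⟩ | ⟨rfl, rfl⟩ | ⟨rfl, hb⟩ | ⟨rfl, hb⟩)
          · left; exact ⟨rfl, rfl⟩
          · right; left; exact ⟨rfl, rfl⟩
          · right; right; left; exact ⟨b, hb, rfl, rfl⟩
          · right; right; right; exact ⟨b, hb, rfl, rfl⟩
        · rintro (⟨rfl, rfl⟩ | ⟨rfl, rfl⟩ | ⟨s, hs, rfl, rfl⟩ | ⟨s, hs, rfl, rfl⟩)
          · left; exact ⟨rfl, rfl⟩
          · right; left; exact ⟨rfl, rfl⟩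
          · right; right; left; exact ⟨rfl, hs⟩
          · right; right; right; exact ⟨rfl, hs⟩
      rw [hgt, Finset.card_insert_of_notMem (by
          intro hmem
          simp only [Finset.mem_insert, Finset.mem_union, Finset.mem_image, Finset.mem_Icc,
            Prod.mk.injEq] at hmem
          rcases hmem with ⟨h, -⟩ | ⟨s, hs, h, -⟩ | ⟨s, hs, h, -⟩ <;> omega),
        Finset.card_insert_of_notMem (by
          intro hmem
          simp only [Finset.mem_union, Finset.mem_image, Finset.mem_Icc,
            Prod.mk.injEq] at hmem
          rcases hmem with ⟨s, hs, h, -⟩ | ⟨s, hs, -, h⟩ <;> omega),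
        Finset.card_union_of_disjoint (by
          rw [Finset.disjoint_left]
          intro x hx hy
          obtain ⟨a, b⟩ := x
          simp only [Finset.mem_image, Finset.mem_Icc, Prod.mk.injEq] at hx hy
          obtain ⟨s, hs, ha, hb⟩ := hx
          obtain ⟨s', hs', ha', hb'⟩ := hy
          omega),
        Finset.card_image_of_injective _ inj0, Finset.card_image_of_injective _ inj1,
        Nat.card_Icc, Nat.card_Icc]
      omega

/-- For `1 ≤ i ≤ n-1`, the generator `u_i` of `TL_n` corresponds
under the outdegree bijection to the triangulation `genTri n i` of the
`(n+2)`-gon, consisting of the diagonals `p_{n-i+1}p_{n-i+3}` and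
`p₂p_{n-i+3}`, the fan `{p₁p_j : n-i+3 ≤ j ≤ n+1}` at `p₁` and the fan
`{p₂p_j : 4 ≤ j ≤ n-i+1}` at `p₂`. -/
theorem stmt12 (n i : ℕ) (h1 : 1 ≤ i) (h2 : i ≤ n - 1) :
    IsTriangulation n (genTri n i) ∧
    ∀ t < n, BtoDn n (matchOutdeg (genMatch n i)) t = triOutdeg (genTri n i) t := by
  have hn : i + 1 ≤ n := by omega
  refine ⟨genTri_isTri n i h1 hn, fun t ht => ?_⟩
  rw [lhs_val n i h1 hn, rhs_val n i h1 hn]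
end
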